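/- Let K = {a,b,c,ab,bc} be a path with two edges and L = {u,v,uv} a single edge. Then the join K * L is not isomorphic to the Morse complex M(N) of any simplicial complex N. -/

import Mathlib

open Finset

/-- An abstract simplicial complex on vertex type `V`. -/
structure SComplex (V : Type*) where
  faces : Finset V → Prop
  not_empty : ¬ faces ∅
  down_closed : ∀ {σ τ : Finset V}, faces τ → σ ⊆ τ → σ.Nonempty → faces σ

/-- The complex generated by a set of simplices (downward closure). -/
def ofGens {V : Type*} (gens : Set (Finset V)) : SComplex V where
  faces σ := σ.Nonempty ∧ ∃ τ ∈ gens, σ ⊆ τ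
  not_empty h := by simpa using h.1
  down_closed := by
    rintro σ τ ⟨-, τ', hτ', hsub'⟩ hsub hne
    exact ⟨hne, τ', hτ', hsub.trans hsub'⟩

/-- A primitive (gradient) vector field on `K`: a single regular pair `(σ, τ)`
with `σ` a codimension-one face of `τ`. -/
structure VPair {V : Type*} (K : SComplex V) where
  lo : Finset V
  hi : Finset V
  lo_face : K.faces lo
  hi_face : K.faces hi
  lo_sub : lo ⊆ hi
  card_eq : hi.card = lo.card + 1

noncomputable instance {V : Type*} (K : SComplex V) : DecidableEq (VPair K) :=
  Classical.decEq _

/-- Two primitive pairs share no simplex. -/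
def VPair.Compatible {V : Type*} {K : SComplex V} (p q : VPair K) : Prop :=
  p.lo ≠ q.lo ∧ p.lo ≠ q.hi ∧ p.hi ≠ q.lo ∧ p.hi ≠ q.hi

/-- A discrete vector field: each simplex occurs in at most one pair. -/
def IsDVF {V : Type*} {K : SComplex V} (W : Set (VPair K)) : Prop :=
  ∀ p ∈ W, ∀ q ∈ W, p ≠ q → VPair.Compatible p q

/-- Existence of a nontrivial closed `V`-path. -/
def HasClosedPath {V : Type*} {K : SComplex V} (W : Set (VPair K)) : Prop :=
  ∃ k : ℕ, 0 < k ∧ ∃ c : ZMod k → VPair K, (∀ i, c i ∈ W) ∧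
    ∀ i, (c (i + 1)).lo ⊆ (c i).hi ∧ (c (i + 1)).lo ≠ (c i).lo ∧
      (c (i + 1)).lo.card + 1 = (c i).hi.card

/-- A gradient vector field: a discrete vector field with no nontrivial closed path. -/
def IsGVF {V : Type*} {K : SComplex V} (W : Set (VPair K)) : Prop :=
  IsDVF W ∧ ¬ HasClosedPath W

/-- The Morse complex of `K`: vertices are primitive gradient vector fields,
simplices are gradient vector fields. -/
def MorseComplex {V : Type*} (K : SComplex V) : SComplex (VPair K) where
  faces S := S.Nonempty ∧ IsGVF {p | p ∈ S}
  not_empty h := by simpa using h.1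
  down_closed := by
    rintro σ τ ⟨hne', hdvf, hnc⟩ hsub hne
    refine ⟨hne, fun p hp q hq hpq => hdvf p (hsub hp) q (hsub hq) hpq, fun h => hnc ?_⟩
    obtain ⟨k, hk, c, hc, hpath⟩ := h
    exact ⟨k, hk, c, fun i => hsub (hc i), hpath⟩

/-- The pure Morse complex: the subcomplex of `MorseComplex K` generated by the
facets of maximum dimension (maximum gradient vector fields). -/
def pureMorse {V : Type*} (K : SComplex V) : SComplex (VPair K) where
  faces S := (MorseComplex K).faces S ∧ ∃ T : Finset (VPair K), S ⊆ T ∧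
      (MorseComplex K).faces T ∧
      ∀ T' : Finset (VPair K), (MorseComplex K).faces T' → T'.card ≤ T.card
  not_empty h := (MorseComplex K).not_empty h.1
  down_closed := by
    rintro σ τ ⟨hτ, T, hsub', hT, hmax⟩ hsub hne
    exact ⟨(MorseComplex K).down_closed hτ hsub hne, T, hsub.trans hsub', hT, hmax⟩

/-- `σ` is a facet (maximal simplex) of `K`. -/
def IsFacet {V : Type*} (K : SComplex V) (σ : Finset V) : Prop :=
  K.faces σ ∧ ∀ τ, K.faces τ → σ ⊆ τ → σ = τ

/-- `w` dominates `w'`: every facet containing `w'` contains `w`. -/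
def Dominates {V : Type*} (K : SComplex V) (w w' : V) : Prop :=
  ∀ σ, IsFacet K σ → w' ∈ σ → w ∈ σ

/-- `K` is minimal: no vertex dominates another vertex. -/
def MinimalComplex {V : Type*} (K : SComplex V) : Prop :=
  ∀ w w' : V, K.faces {w} → K.faces {w'} → w ≠ w' → ¬ Dominates K w w'

/-- Strong collapsibility of a face predicate: a sequence of removals of
dominated vertices reaching a single point. -/
inductive SCAux {V : Type*} : (Finset V → Prop) → Prop
  | point (F : Finset V → Prop) (v : V) (h : ∀ σ, F σ ↔ σ = {v}) : SCAux F
  | step (F : Finset V → Prop) (w w' : V) (hne : w ≠ w') (hw : F {w}) (hw' : F {w'})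
      (hdom : ∀ σ, (F σ ∧ ∀ τ, F τ → σ ⊆ τ → σ = τ) → w' ∈ σ → w ∈ σ)
      (h : SCAux (fun σ => F σ ∧ w' ∉ σ)) : SCAux F

def StronglyCollapsible {V : Type*} (K : SComplex V) : Prop := SCAux K.faces

/-- `F` strongly collapses to `G` by a sequence of removals of dominated vertices. -/
inductive SCTo {V : Type*} : (Finset V → Prop) → (Finset V → Prop) → Prop
  | refl (F : Finset V → Prop) : SCTo F F
  | step (F G : Finset V → Prop) (w w' : V) (hne : w ≠ w') (hw : F {w}) (hw' : F {w'})
      (hdom : ∀ σ, (F σ ∧ ∀ τ, F τ → σ ⊆ τ → σ = τ) → w' ∈ σ → w ∈ σ)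
      (h : SCTo (fun σ => F σ ∧ w' ∉ σ) G) : SCTo F G

/-- Collapsibility (Forman): removal of free pairs down to a point. -/
inductive CollAux {V : Type*} : (Finset V → Prop) → Prop
  | point (F : Finset V → Prop) (v : V) (h : ∀ σ, F σ ↔ σ = {v}) : CollAux F
  | step (F : Finset V → Prop) (σ τ : Finset V) (hστ : σ ⊂ τ) (hσ : F σ) (hτ : F τ)
      (hfree : ∀ ρ, F ρ → σ ⊂ ρ → ρ = τ)
      (h : CollAux (fun ρ => F ρ ∧ ρ ≠ σ ∧ ρ ≠ τ)) : CollAux F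

def Collapsible {V : Type*} (K : SComplex V) : Prop := CollAux K.faces

/-- The degree of a vertex: the number of edges of `K` containing it. -/
noncomputable def sdeg {V : Type*} (K : SComplex V) (x : V) : ℕ :=
  Set.ncard {σ : Finset V | K.faces σ ∧ σ.card = 2 ∧ x ∈ σ}

/-- Image of a finset, with a classical decidability instance. -/
noncomputable def fimage {V W : Type*} (f : V → W) (σ : Finset V) : Finset W :=
  haveI := Classical.decEq W
  σ.image f

/-- An isomorphism between two simplicial complexes given by face predicates. -/
structure ComplexIso {V W : Type*} (F : Finset V → Prop) (G : Finset W → Prop) where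
  toFun : V → W
  invFun : W → V
  left_inv : ∀ x, F {x} → invFun (toFun x) = x
  right_inv : ∀ y, G {y} → toFun (invFun y) = y
  map_face : ∀ σ, F σ → G (fimage toFun σ)
  inv_face : ∀ τ, G τ → F (fimage invFun τ)

/-- The join of two simplicial complexes. -/
def sJoin {V W : Type*} [DecidableEq V] [DecidableEq W] (K : SComplex V) (L : SComplex W) :
    SComplex (V ⊕ W) :=
  ofGens {σ | ∃ α β, (K.faces α ∨ α = ∅) ∧ (L.faces β ∨ β = ∅) ∧
    σ = α.image Sum.inl ∪ β.image Sum.inr}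

/-- The disjoint union of two simplicial complexes. -/
def sDisjUnion {V W : Type*} [DecidableEq V] [DecidableEq W] (K : SComplex V) (L : SComplex W) :
    SComplex (V ⊕ W) :=
  ofGens ({σ | ∃ α, K.faces α ∧ σ = α.image Sum.inl} ∪
          {σ | ∃ β, L.faces β ∧ σ = β.image Sum.inr})

/-- The simplicial complex of a simple graph (vertices and edges). -/
def graphComplex {V : Type*} [DecidableEq V] (G : SimpleGraph V) : SComplex V :=
  ofGens ({σ | ∃ x, σ = {x}} ∪ {σ | ∃ x y, G.Adj x y ∧ σ = ({x, y} : Finset V)})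

/-- Attach a leaf (pendant edge) to `K` at the vertex `x`. -/
def attachLeaf {V : Type*} [DecidableEq V] (K : SComplex V) (x : V) : SComplex (V ⊕ Unit) :=
  ofGens ({σ | ∃ α, K.faces α ∧ σ = α.image Sum.inl} ∪
          {({Sum.inl x, Sum.inr ()} : Finset (V ⊕ Unit))})

/-- The cycle graph on `ZMod n`. -/
def cycleGraph (n : ℕ) : SimpleGraph (ZMod n) :=
  SimpleGraph.fromRel (fun i j => j = i + 1)

/-- Attach one new leaf to every vertex of a graph. -/
def addLeaves {V : Type*} [DecidableEq V] (G : SimpleGraph V) : SComplex (V ⊕ V) :=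
  ofGens ({σ | ∃ x y, G.Adj x y ∧ σ = ({Sum.inl x, Sum.inl y} : Finset (V ⊕ V))} ∪
          {σ | ∃ u, σ = ({Sum.inl u, Sum.inr u} : Finset (V ⊕ V))})

/-- The geometric realization of `K`, inside `V → ℝ`. -/
def realization {V : Type*} (K : SComplex V) : Set (V → ℝ) :=
  {f | ∃ σ, K.faces σ ∧ (∀ x, 0 ≤ f x) ∧ (∀ x, f x ≠ 0 → x ∈ σ) ∧ ∑ x ∈ σ, f x = 1}

/-- A Hasse-diagram edge of a poset: a covering pair. -/
structure HEdge (P : Type*) [PartialOrder P] where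
  lo : P
  hi : P
  cov : lo ⋖ hi

noncomputable instance {P : Type*} [PartialOrder P] : DecidableEq (HEdge P) :=
  Classical.decEq _

def HEdge.Compat {P : Type*} [PartialOrder P] (p q : HEdge P) : Prop :=
  p.lo ≠ q.lo ∧ p.lo ≠ q.hi ∧ p.hi ≠ q.lo ∧ p.hi ≠ q.hi

def HasPosetCycle {P : Type*} [PartialOrder P] (W : Set (HEdge P)) : Prop :=
  ∃ k : ℕ, 0 < k ∧ ∃ c : ZMod k → HEdge P, (∀ i, c i ∈ W) ∧
    ∀ i, (c (i + 1)).lo ⋖ (c i).hi ∧ (c (i + 1)).lo ≠ (c i).lo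

/-- The generalized Morse complex `f(P)` of a poset: simplices are acyclic
matchings of the Hasse diagram of `P`. -/
def genMorse (P : Type*) [PartialOrder P] : SComplex (HEdge P) where
  faces S := S.Nonempty ∧ (∀ p ∈ S, ∀ q ∈ S, p ≠ q → HEdge.Compat p q) ∧
    ¬ HasPosetCycle {p | p ∈ S}
  not_empty h := by simpa using h.1
  down_closed := by
    rintro σ τ ⟨-, hm, hc⟩ hsub hne
    refine ⟨hne, fun p hp q hq h => hm p (hsub hp) q (hsub hq) h, fun h => hc ?_⟩
    obtain ⟨k, hk, c, hc', hp⟩ := h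
    exact ⟨k, hk, c, fun i => hsub (hc' i), hp⟩

/-- The automorphism group of a simplicial complex, as a subgroup of `Perm V`. -/
def autGroup {V : Type*} [DecidableEq V] (K : SComplex V) : Subgroup (Equiv.Perm V) where
  carrier := {e | ∀ σ : Finset V, K.faces σ ↔ K.faces (σ.image e)}
  one_mem' := by intro σ; simp
  mul_mem' := by
    intro a b ha hb σ
    rw [hb σ, ha (σ.image b)]
    simp [Finset.image_image, Equiv.Perm.coe_mul]
  inv_mem' := by
    intro a ha σ
    have := ha (σ.image ⇑a⁻¹)
    simpa [Finset.image_image, Function.comp_def,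
      Finset.image_id'] using this.symm

/-- The full subcomplex of `K` on a set `S` of vertices. -/
def restrictTo {V : Type*} (K : SComplex V) (S : Set V) : Finset V → Prop :=
  fun σ => K.faces σ ∧ ∀ x ∈ σ, x ∈ S

/-- `S` spans a fully connected subcomplex: `K = (K∣S) * (K∣Sᶜ)`. -/
def FullyConnected {V : Type*} [DecidableEq V] (K : SComplex V) (S : Set V) : Prop :=
  ∀ σ : Finset V, K.faces σ ↔ (σ.Nonempty ∧ ∃ α β : Finset V,
    (restrictTo K S α ∨ α = ∅) ∧ ((K.faces β ∧ ∀ x ∈ β, x ∉ S) ∨ β = ∅) ∧ σ = α ∪ β)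

/-- The primitive pair `(x, xy)` on an edge `{x,y}`. -/
def edgePair {V : Type*} [DecidableEq V] (K : SComplex V) (x y : V) (hxy : x ≠ y)
    (h : K.faces {x, y}) : VPair K where
  lo := {x}
  hi := {x, y}
  lo_face := K.down_closed h (by simp) (Finset.singleton_nonempty x)
  hi_face := h
  lo_sub := by simp
  card_eq := by
    rw [Finset.card_singleton, Finset.card_insert_of_notMem (by simp [hxy]),
      Finset.card_singleton]

/-!
An isomorphism `K * L ≅ M(N)` is a bijection between the five vertices of the join and the
primitive pairs of `N`. If `N` has a simplex `τ` with at least three vertices, the pairs inside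
`τ` alone number `|τ|² ≥ 9`. Otherwise `N` is a graph, and each of its edges `xy` carries exactly
the two pairs `(x, xy)` and `(y, xy)`, so their number is even. Five is neither.
-/

section

variable {V : Type*} {K : SComplex V}

theorem VPair.ext {p q : VPair K} (hlo : p.lo = q.lo) (hhi : p.hi = q.hi) : p = q := by
  cases p; cases q; cases hlo; cases hhi; rfl

theorem VPair.lo_nonempty (p : VPair K) : p.lo.Nonempty :=
  nonempty_iff_ne_empty.mpr fun h => K.not_empty (h ▸ p.lo_face)

theorem VPair.injective_lo_hi : Function.Injective fun p : VPair K => (p.lo, p.hi) :=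
  fun _ _ h => VPair.ext (congrArg Prod.fst h) (congrArg Prod.snd h)

theorem VPair.mem_range_lo_hi {σ τ : Finset V} (hτ : K.faces τ) (hστ : σ ⊆ τ)
    (hσ : σ.Nonempty) (hcard : τ.card = σ.card + 1) :
    (σ, τ) ∈ Set.range fun p : VPair K => (p.lo, p.hi) :=
  ⟨⟨σ, τ, K.down_closed hτ hστ hσ, hτ, hστ, hcard⟩, rfl⟩

theorem MorseComplex.faces_singleton (p : VPair K) : (MorseComplex K).faces {p} := by
  refine ⟨singleton_nonempty p, fun a ha b hb hab => ?_, ?_⟩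
  · simp only [mem_singleton, Set.mem_ofPred_eq] at ha hb
    exact absurd (ha.trans hb.symm) hab
  · rintro ⟨k, -, c, hc, hpath⟩
    have hc' : ∀ i, c i = p := fun i => by simpa using hc i
    exact (hpath 0).2.1 (by rw [hc', hc'])

end

theorem even_natCard_of_involutive {α : Type*} [Finite α] {f : α → α}
    (hf : Function.Involutive f) (hfix : ∀ x, f x ≠ x) : Even (Nat.card α) := by
  classical
  cases nonempty_fintype α
  have hsq : hf.toPerm f ^ 2 = 1 := by ext x; simp [sq, hf x]
  have hsupp : (hf.toPerm f).support = Finset.univ := by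
    ext x; simpa using hfix x
  rw [Nat.card_eq_fintype_card, ← Finset.card_univ, ← hsupp]
  exact even_iff_two_dvd.mpr (Equiv.Perm.two_dvd_card_support hsq)

/-- A simplex `τ` with at least three vertices carries `|τ|²` primitive pairs: the `|τ|` pairs
`(τ \ x, τ)` and the `|τ| (|τ| - 1)` pairs `(x, xy)`. -/
theorem sq_card_le_natCard_vpair {V : Type*} [DecidableEq V] {K : SComplex V}
    [Finite (VPair K)] {τ : Finset V} (hτ : K.faces τ) (h3 : 3 ≤ τ.card) :
    τ.card ^ 2 ≤ Nat.card (VPair K) := by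
  let g : V × V → Finset V × Finset V := fun xy =>
    if xy.1 = xy.2 then (τ.erase xy.1, τ) else ({xy.1}, {xy.1, xy.2})
  have hmaps : ∀ xy ∈ τ ×ˢ τ, g xy ∈ Set.range fun p : VPair K => (p.lo, p.hi) := by
    rintro ⟨x, y⟩ hxy
    obtain ⟨hx, hy⟩ := mem_product.mp hxy
    by_cases h : x = y
    · simp only [g, if_pos h]
      refine VPair.mem_range_lo_hi hτ (erase_subset x τ) ?_ ?_
      · exact card_pos.mp (by rw [card_erase_of_mem hx]; omega)
      · rw [card_erase_of_mem hx]; omega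
    · simp only [g, if_neg h]
      refine VPair.mem_range_lo_hi (K.down_closed hτ (insert_subset hx (by simpa using hy))
        (insert_nonempty _ _)) (by simp) (singleton_nonempty x) ?_
      rw [card_pair h, card_singleton]
  have hinj : Set.InjOn g ↑(τ ×ˢ τ) := by
    rintro ⟨x, y⟩ hxy ⟨x', y'⟩ hxy' hg
    by_cases h : x = y <;> by_cases h' : x' = y' <;> simp only [g, h, h', if_true, if_false,
      Prod.mk.injEq] at hg ⊢
    · subst h h'
      have := erase_injOn τ (mem_product.mp hxy).1 (mem_product.mp hxy').1 hg.1
      exact ⟨this, this⟩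
    · exact absurd (hg.2 ▸ h3) (by rw [card_pair h']; omega)
    · exact absurd (hg.2 ▸ h3) (by rw [card_pair h]; omega)
    · obtain rfl := singleton_injective hg.1
      have hy : y ∈ ({x, y'} : Finset V) := hg.2 ▸ mem_insert_of_mem (mem_singleton_self y)
      exact ⟨rfl, mem_singleton.mp ((mem_insert.mp hy).resolve_left (Ne.symm h))⟩
  calc τ.card ^ 2 = (τ ×ˢ τ).card := by rw [card_product, sq]
    _ = (g '' ↑(τ ×ˢ τ)).ncard := by rw [hinj.ncard_image, Set.ncard_coe_finset]
    _ ≤ (Set.range fun p : VPair K => (p.lo, p.hi)).ncard :=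
      Set.ncard_le_ncard (fun _ ⟨xy, hxy, he⟩ => he ▸ hmaps xy hxy) (Set.finite_range _)
    _ = Nat.card (VPair K) := Set.ncard_range_of_injective VPair.injective_lo_hi

/-- In a complex of dimension at most one every primitive pair is `(x, xy)`, and exchanging
`x` for `y` is a fixed-point-free involution. -/
theorem even_natCard_vpair_of_forall_card_le_two {V : Type*} [DecidableEq V] {K : SComplex V}
    [Finite (VPair K)] (hdim : ∀ σ, K.faces σ → σ.card ≤ 2) : Even (Nat.card (VPair K)) := by
  have hcard : ∀ p : VPair K, (p.hi \ p.lo).card = p.lo.card := fun p => by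
    have := p.lo_nonempty.card_pos
    have := hdim _ p.hi_face
    have := p.card_eq
    rw [card_sdiff_of_subset p.lo_sub]
    omega
  let flip : VPair K → VPair K := fun p =>
    { lo := p.hi \ p.lo
      hi := p.hi
      lo_face := K.down_closed p.hi_face sdiff_subset
        (card_pos.mp ((hcard p).symm ▸ p.lo_nonempty.card_pos))
      hi_face := p.hi_face
      lo_sub := sdiff_subset
      card_eq := by rw [hcard, p.card_eq] }
  refine even_natCard_of_involutive (f := flip)
    (fun p => VPair.ext (Finset.sdiff_sdiff_eq_self p.lo_sub) rfl) fun p hp => ?_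
  obtain ⟨x, hx⟩ := p.lo_nonempty
  have hx' : x ∈ (flip p).lo := (congrArg VPair.lo hp).symm ▸ hx
  exact (mem_sdiff.mp hx').2 hx

def ComplexIso.equivOfForallFacesSingleton {V W : Type*} {F : Finset V → Prop}
    {G : Finset W → Prop} (I : ComplexIso F G) (hF : ∀ x, F {x}) (hG : ∀ y, G {y}) : V ≃ W where
  toFun := I.toFun
  invFun := I.invFun
  left_inv x := I.left_inv x (hF x)
  right_inv y := I.right_inv y (hG y)

theorem graphComplex_faces_singleton {V : Type*} [DecidableEq V] (G : SimpleGraph V) (v : V) :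
    (graphComplex G).faces {v} :=
  ⟨singleton_nonempty v, {v}, Or.inl ⟨v, rfl⟩, subset_rfl⟩

theorem sJoin_faces_singleton {V W : Type*} [DecidableEq V] [DecidableEq W] {K : SComplex V}
    {L : SComplex W} (hK : ∀ v, K.faces {v}) (hL : ∀ w, L.faces {w}) (x : V ⊕ W) :
    (sJoin K L).faces {x} := by
  refine ⟨singleton_nonempty x, {x}, ?_, subset_rfl⟩
  rcases x with v | w
  · exact ⟨{v}, ∅, Or.inl (hK v), Or.inr rfl, by simp⟩
  · exact ⟨∅, {w}, Or.inr rfl, Or.inl (hL w), by simp⟩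

/-- the join of the path with two edges and a single edge is not
isomorphic to the Morse complex of any simplicial complex. -/
theorem stmt_10 :
    ∀ (W : Type*) (N : SComplex W),
      ¬ Nonempty (ComplexIso
        (sJoin (graphComplex (SimpleGraph.pathGraph 3))
          (graphComplex (SimpleGraph.pathGraph 2))).faces
        (MorseComplex N).faces) := by
  rintro W N ⟨I⟩
  classical
  let e := I.equivOfForallFacesSingleton
    (sJoin_faces_singleton (graphComplex_faces_singleton _) (graphComplex_faces_singleton _))
    MorseComplex.faces_singleton
  have : Finite (VPair N) := .of_equiv _ e
  have hcard : Nat.card (VPair N) = 5 := by rw [← Nat.card_congr e]; simp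
  by_cases hdim : ∀ σ, N.faces σ → σ.card ≤ 2
  · have heven := even_natCard_vpair_of_forall_card_le_two hdim
    rw [hcard] at heven
    exact absurd heven (by decide)
  · push Not at hdim
    obtain ⟨τ, hτ, h3⟩ := hdim
    have := sq_card_le_natCard_vpair hτ h3
    nlinarith
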